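/- Let A ∈ ℝ^{n×m} with m < n and rank m, compact SVD A = V S Uᵀ. Suppose ρ*_y(y) = exp(f₁(y_A)) exp(f₂(y_{A⊥})) where y_A = V Vᵀ y and y_{A⊥} = y − y_A, with f₁, f₂ smooth. Let ρ_y^∞ be a probability density supported on range(A) of the form ρ_y^∞ ∝ exp(g(y_A)) satisfying Aᵀ ∇_y log(ρ_y^∞/ρ*_y)(A u) = 0 for all u. Then ∇_{y_A} g = ∇_{y_A} f₁ on range(A), so ρ_y^∞ ∝ exp(f₁(y_A)). -/

import Mathlib

open Matrix Real

/-- Over-determined stochastic case: if `ρ*_y(y) = e^{f₁(y_A)} e^{f₂(y_{A⊥})}` is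
separable along `col A` (with `y_A = V Vᵀ y`), and the equilibrium density
`ρ_y^∞ ∝ e^{g(y_A)}` supported on `range A` satisfies the stationarity condition
`Aᵀ ∇_y log(ρ_y^∞/ρ*_y)(A u) = 0` for all `u`, then `∇_{y_A} g = ∇_{y_A} f₁` on
`range A`, and hence `ρ_y^∞ ∝ e^{f₁(y_A)}` there. -/
theorem stmt_15 {n m : ℕ} (hmn : m < n)
    (A : Matrix (Fin n) (Fin m) ℝ) (V : Matrix (Fin n) (Fin m) ℝ)
    (S : Matrix (Fin m) (Fin m) ℝ) (U : Matrix (Fin m) (Fin m) ℝ)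
    (hSVD : A = V * S * Uᵀ) (hV : Vᵀ * V = 1)
    (hS : Invertible S) (hSdiag : ∀ i j, i ≠ j → S i j = 0)
    (hU : Uᵀ * U = 1) (hUU : U * Uᵀ = 1)
    (f1 f2 g : (Fin n → ℝ) → ℝ)
    (hf1 : ContDiff ℝ (⊤ : ℕ∞) f1) (hf2 : ContDiff ℝ (⊤ : ℕ∞) f2) (hg : ContDiff ℝ (⊤ : ℕ∞) g)
    (ρstar ρinf : (Fin n → ℝ) → ℝ) (c : ℝ) (hc : 0 < c)
    (hρstar : ∀ y, ρstar y
      = Real.exp (f1 ((V * Vᵀ).mulVec y)) * Real.exp (f2 (y - (V * Vᵀ).mulVec y)))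
    (hρinf : ∀ y, ρinf y = c * Real.exp (g ((V * Vᵀ).mulVec y)))
    -- stationarity: `Aᵀ ∇_y log(ρ_y^∞ / ρ*_y)(A u) = 0` for all `u`
    (hstat : ∀ u : Fin m → ℝ,
      Aᵀ.mulVec (fun i => fderiv ℝ (fun y => Real.log (ρinf y / ρstar y))
        (A.mulVec u) (Pi.single i 1)) = 0) :
    (∀ u : Fin m → ℝ,
      (V * Vᵀ).mulVec (fun i => fderiv ℝ g (A.mulVec u) (Pi.single i 1))
        = (V * Vᵀ).mulVec (fun i => fderiv ℝ f1 (A.mulVec u) (Pi.single i 1))) ∧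
    ∃ c' : ℝ, 0 < c' ∧ ∀ u : Fin m → ℝ,
      ρinf (A.mulVec u) = c' * Real.exp (f1 ((V * Vᵀ).mulVec (A.mulVec u))) := by
  haveI := hS
  set P : Matrix (Fin n) (Fin n) ℝ := V * Vᵀ with hPdef
  have hPA : P * A = A := by
    rw [hPdef, hSVD]
    calc V * Vᵀ * (V * S * Uᵀ) = V * (Vᵀ * V) * (S * Uᵀ) := by
          simp only [Matrix.mul_assoc]
      _ = V * S * Uᵀ := by rw [hV, Matrix.mul_one, ← Matrix.mul_assoc]
  have hPAu : ∀ u : Fin m → ℝ, P.mulVec (A.mulVec u) = A.mulVec u := by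
    intro u; rw [Matrix.mulVec_mulVec, hPA]
  have hVA : A * (U * ⅟S) = V := by
    rw [hSVD]
    calc V * S * Uᵀ * (U * ⅟S) = V * S * ((Uᵀ * U) * ⅟S) := by
          simp only [Matrix.mul_assoc]
      _ = V * (S * ⅟S) := by rw [hU, Matrix.one_mul, Matrix.mul_assoc]
      _ = V := by rw [mul_invOf_self, Matrix.mul_one]
  have hPrange : ∀ x : Fin n → ℝ, P.mulVec x = A.mulVec ((U * ⅟S * Vᵀ).mulVec x) := by
    intro x
    rw [Matrix.mulVec_mulVec, hPdef, ← hVA]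
    congr 1
    simp only [Matrix.mul_assoc]
  have hPsym : ∀ i k, P k i = P i k := by
    intro i k
    have h : Pᵀ = P := by rw [hPdef, Matrix.transpose_mul, Matrix.transpose_transpose]
    have := congrFun (congrFun h i) k
    simpa [Matrix.transpose_apply] using this
  -- continuous linear maps
  set L : (Fin n → ℝ) →L[ℝ] (Fin n → ℝ) := LinearMap.toContinuousLinearMap P.mulVecLin with hL
  set LA : (Fin m → ℝ) →L[ℝ] (Fin n → ℝ) := LinearMap.toContinuousLinearMap A.mulVecLin with hLA
  have hLapp : ∀ y, L y = P.mulVec y := fun y => rfl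
  have hLAapp : ∀ u, LA u = A.mulVec u := fun u => rfl
  have hgd := hg.differentiable (by simp)
  have hf1d := hf1.differentiable (by simp)
  have hf2d := hf2.differentiable (by simp)
  -- log-quotient rewrite
  have hq : (fun y => Real.log (ρinf y / ρstar y))
      = fun y => Real.log c + (g (P.mulVec y) - f1 (P.mulVec y) - f2 (y - P.mulVec y)) := by
    funext y
    rw [hρinf, hρstar]
    rw [Real.log_div (by positivity) (by positivity),
      Real.log_mul (ne_of_gt hc) (Real.exp_ne_zero _),
      Real.log_mul (Real.exp_ne_zero _) (Real.exp_ne_zero _),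
      Real.log_exp, Real.log_exp, Real.log_exp]
    ring
  -- decomposition of vectors into single basis
  have hvdec : ∀ (k : ℕ) (v : Fin k → ℝ), v = ∑ j, v j • (Pi.single j 1 : Fin k → ℝ) := by
    intro k v
    funext i
    simp [Finset.sum_apply, Pi.single_apply]
  -- key cancellation
  have key : ∀ u v : Fin m → ℝ,
      fderiv ℝ g (A.mulVec u) (A.mulVec v) = fderiv ℝ f1 (A.mulVec u) (A.mulVec v) := by
    intro u v
    set Dq : (Fin n → ℝ) →L[ℝ] ℝ :=
      ((fderiv ℝ g (A.mulVec u)).comp L - (fderiv ℝ f1 (A.mulVec u)).comp L)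
        - (fderiv ℝ f2 0).comp (ContinuousLinearMap.id ℝ (Fin n → ℝ) - L) with hDq
    have hMAu : (ContinuousLinearMap.id ℝ (Fin n → ℝ) - L) (A.mulVec u) = 0 := by
      simp [ContinuousLinearMap.sub_apply, hLapp, hPAu u]
    have hD : HasFDerivAt (fun y => Real.log (ρinf y / ρstar y)) Dq (A.mulVec u) := by
      rw [hq]
      have hgat : HasFDerivAt g (fderiv ℝ g (A.mulVec u)) (L (A.mulVec u)) := by
        rw [hLapp, hPAu u]; exact (hgd _).hasFDerivAt
      have hf1at : HasFDerivAt f1 (fderiv ℝ f1 (A.mulVec u)) (L (A.mulVec u)) := by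
        rw [hLapp, hPAu u]; exact (hf1d _).hasFDerivAt
      have hf2at : HasFDerivAt f2 (fderiv ℝ f2 0)
          ((ContinuousLinearMap.id ℝ (Fin n → ℝ) - L) (A.mulVec u)) := by
        rw [hMAu]; exact (hf2d _).hasFDerivAt
      have h1 := hgat.comp (A.mulVec u) L.hasFDerivAt
      have h2 := hf1at.comp (A.mulVec u) L.hasFDerivAt
      have h3 := hf2at.comp (A.mulVec u)
        (ContinuousLinearMap.id ℝ (Fin n → ℝ) - L).hasFDerivAt
      exact (((h1.sub h2).sub h3).const_add (Real.log c))
    have hfd : fderiv ℝ (fun y => Real.log (ρinf y / ρstar y)) (A.mulVec u) = Dq := hD.fderiv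
    -- Dq vanishes on columns of A
    have h0 : ∀ j, Dq (A.mulVec (Pi.single j 1)) = 0 := by
      intro j
      have hj := congrFun (hstat u) j
      simp only [hfd] at hj
      have hsum : (Aᵀ.mulVec (fun i => Dq (Pi.single i 1))) j
          = ∑ i, A i j * Dq (Pi.single i 1) := by
        simp [Matrix.mulVec, dotProduct, Matrix.transpose_apply]
      have hAj : A.mulVec (Pi.single j 1) = ∑ i, (A i j) • (Pi.single i 1 : Fin n → ℝ) := by
        funext k
        simp [Matrix.mulVec, dotProduct, Pi.single_apply, Finset.sum_apply]
      rw [hAj, map_sum]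
      simp only [_root_.map_smul, smul_eq_mul]
      rw [← hsum, hj]
      rfl
    have hzero : Dq (A.mulVec v) = 0 := by
      have hAv : A.mulVec v = ∑ j, (v j) • A.mulVec (Pi.single j 1) := by
        conv_lhs => rw [← hLAapp, hvdec m v]
        rw [map_sum]
        simp only [_root_.map_smul, hLAapp, Matrix.mulVec_smul]
      rw [hAv, map_sum]
      simp only [_root_.map_smul, smul_eq_mul, h0, mul_zero, Finset.sum_const_zero]
    -- unfold Dq at A v
    have hform : Dq (A.mulVec v)
        = fderiv ℝ g (A.mulVec u) (A.mulVec v) - fderiv ℝ f1 (A.mulVec u) (A.mulVec v) := by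
      simp [hDq, ContinuousLinearMap.sub_apply, ContinuousLinearMap.comp_apply,
        hLapp, hPAu v]
    rw [hform] at hzero
    linarith
  constructor
  · -- first conclusion
    intro u
    have hcomp : ∀ (h : (Fin n → ℝ) →L[ℝ] ℝ) (k : Fin n),
        (P.mulVec (fun i => h (Pi.single i 1))) k = h (P.mulVec (Pi.single k 1)) := by
      intro h k
      have h2 : P.mulVec (Pi.single k 1) = fun i => P k i := by
        funext i
        simp [Matrix.mulVec, dotProduct, Pi.single_apply, hPsym i k]
      have h3 : (fun i => P k i) = ∑ i, (P k i) • (Pi.single i 1 : Fin n → ℝ) := by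
        funext j
        simp [Finset.sum_apply, Pi.single_apply]
      rw [h2, h3, map_sum]
      simp [Matrix.mulVec, dotProduct, smul_eq_mul]
    funext k
    rw [hcomp (fderiv ℝ g (A.mulVec u)) k, hcomp (fderiv ℝ f1 (A.mulVec u)) k,
      hPrange]
    exact key u _
  · -- second conclusion
    set ψ : (Fin m → ℝ) → ℝ := fun u => g (A.mulVec u) - f1 (A.mulVec u) with hψ
    have hψdiff : Differentiable ℝ ψ := by
      have h1 : Differentiable ℝ (fun u : Fin m → ℝ => g (A.mulVec u)) :=
        hgd.comp LA.differentiable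
      have h2 : Differentiable ℝ (fun u : Fin m → ℝ => f1 (A.mulVec u)) :=
        hf1d.comp LA.differentiable
      exact h1.sub h2
    have hψ0 : ∀ u, fderiv ℝ ψ u = 0 := by
      intro u
      have hgat : HasFDerivAt g (fderiv ℝ g (A.mulVec u)) (LA u) :=
        (hgd _).hasFDerivAt
      have hf1at : HasFDerivAt f1 (fderiv ℝ f1 (A.mulVec u)) (LA u) :=
        (hf1d _).hasFDerivAt
      have h1 := hgat.comp u LA.hasFDerivAt
      have h2 := hf1at.comp u LA.hasFDerivAt
      have hψat : HasFDerivAt ψ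
          ((fderiv ℝ g (A.mulVec u)).comp LA - (fderiv ℝ f1 (A.mulVec u)).comp LA) u :=
        h1.sub h2
      have hzero : (fderiv ℝ g (A.mulVec u)).comp LA
          - (fderiv ℝ f1 (A.mulVec u)).comp LA = 0 := by
        ext v
        simp only [ContinuousLinearMap.sub_apply, ContinuousLinearMap.comp_apply,
          ContinuousLinearMap.zero_apply, hLAapp]
        rw [key u v, sub_self]
      rw [hψat.fderiv, hzero]
    have hconst : ∀ u : Fin m → ℝ, ψ u = ψ 0 :=
      fun u => is_const_of_fderiv_eq_zero hψdiff hψ0 u 0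
    refine ⟨c * Real.exp (ψ 0), by positivity, fun u => ?_⟩
    rw [hρinf, hPAu u]
    have : g (A.mulVec u) = f1 (A.mulVec u) + ψ 0 := by
      have := hconst u
      simp only [hψ] at this ⊢
      linarith
    rw [this, Real.exp_add]
    ring
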